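/- arXiv:2510.06725 — 3 statements merged into one kernel-verified Lean document; each statement's English description precedes it below -/
import Mathlib

section
/- If L is an N×K complex matrix with L†L = I_K and A is any N×N matrix satisfying A(LL†) = (LL†)A, then L† exp(A) L = exp(L† A L). -/
/-!
Because `A` commutes with `L Lᴴ` and `Lᴴ (L Lᴴ) = Lᴴ`, the compression `X ↦ Lᴴ X L` sends every
power of `A` to the same power of `Lᴴ A L`. Compression is continuous and linear, so it commutes
with the exponential series term by term.
-/

open Matrix

-- `NormedSpace.exp` depends only on the topology, so any submultiplicative matrix norm would do.
attribute [local instance] Matrix.linftyOpNormedRing Matrix.linftyOpNormedAlgebra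

theorem Matrix.mul_pow_mul_eq_pow_of_commute {m n α : Type*} [Fintype m] [Fintype n]
    [DecidableEq m] [DecidableEq n] [Semiring α] {L : Matrix m n α} {R : Matrix n m α}
    {A : Matrix m m α} (hRL : R * L = 1) (hA : Commute A (L * R)) (k : ℕ) :
    R * A ^ k * L = (R * A * L) ^ k := by
  induction k with
  | zero => simpa using hRL
  | succ k ih =>
    calc R * A ^ (k + 1) * L = R * L * R * A ^ k * (A * L) := by
          rw [hRL, Matrix.one_mul, pow_succ, Matrix.mul_assoc, Matrix.mul_assoc, Matrix.mul_assoc]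
      _ = R * A ^ k * (L * R) * (A * L) := by
          simp only [Matrix.mul_assoc, ← (hA.pow_left k).eq]
      _ = (R * A * L) ^ (k + 1) := by
          rw [pow_succ, ← ih]; simp only [Matrix.mul_assoc]

theorem ContinuousLinearMap.map_exp_of_map_pow {𝕂 𝔸 𝔹 : Type*} [RCLike 𝕂] [NormedRing 𝔸]
    [NormedAlgebra 𝕂 𝔸] [CompleteSpace 𝔸] [Ring 𝔹] [Algebra 𝕂 𝔹] [TopologicalSpace 𝔹]
    [IsTopologicalRing 𝔹] [T2Space 𝔹] (f : 𝔸 →L[𝕂] 𝔹) {x : 𝔸}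
    (hf : ∀ n : ℕ, f (x ^ n) = f x ^ n) :
    f (NormedSpace.exp x) = NormedSpace.exp (f x) := by
  rw [NormedSpace.exp_eq_tsum 𝕂, NormedSpace.exp_eq_tsum 𝕂,
    f.map_tsum (NormedSpace.expSeries_summable' x)]
  simp only [map_smul, hf]

/-- If `Lᴴ L = I_K` and `A` commutes with the projector `L Lᴴ`, then
`Lᴴ exp(A) L = exp(Lᴴ A L)`. -/
theorem conj_exp_of_commute_proj {N K : ℕ}
    (L : Matrix (Fin N) (Fin K) ℂ) (A : Matrix (Fin N) (Fin N) ℂ)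
    (hL : Lᴴ * L = 1) (hA : A * (L * Lᴴ) = (L * Lᴴ) * A) :
    Lᴴ * NormedSpace.exp A * L = NormedSpace.exp (Lᴴ * A * L) := by
  let compress : Matrix (Fin N) (Fin N) ℂ →L[ℂ] Matrix (Fin K) (Fin K) ℂ :=
    ((mulLeftLinearMap _ ℂ Lᴴ).comp (mulRightLinearMap _ ℂ L)).toContinuousLinearMap
  have hcompress (X : Matrix (Fin N) (Fin N) ℂ) : compress X = Lᴴ * X * L :=
    (Matrix.mul_assoc Lᴴ X L).symm
  have hpow (k : ℕ) : compress (A ^ k) = compress A ^ k := by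
    rw [hcompress, hcompress]
    exact Matrix.mul_pow_mul_eq_pow_of_commute hL hA k
  calc Lᴴ * NormedSpace.exp A * L = compress (NormedSpace.exp A) := (hcompress _).symm
    _ = NormedSpace.exp (compress A) := compress.map_exp_of_map_pow hpow
    _ = NormedSpace.exp (Lᴴ * A * L) := by rw [hcompress]
end

section
/- Let P be an orthogonal projection on a finite-dimensional Hilbert space and let X, H be operators with P X P = 0 and P (H X) P = 0 and [H, P] = 0. For the unitary V(φ) = exp(i(θφ/2π)H)·exp(iφX) with X² = I and H² = I, the projected generator satisfies P V(φ)† (dV/dφ)(φ) P = i(θ/2π)cos(2φ) H P. -/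
/-!
Write `V φ = exp (φ A) exp (φ B)` with skew-adjoint `A = i(θ/2π)H` and `B = iX`. Then
`V(φ)† V'(φ) = exp (-φB) A exp (φB) + B`. As `H` anticommutes with `X`, `H exp (φB) = exp (-φB) H`,
so the first term is `i(θ/2π) exp (-2φB) H = i(θ/2π) (cos 2φ • H - i sin 2φ • XH)` because
`X² = 1`. Sandwiching with `P` kills `B` and `XH`, and `PHP = HP`.
-/

open Matrix NormedSpace

attribute [local instance] Matrix.frobeniusNormedAddCommGroup Matrix.frobeniusNormedSpace

section Rat
variable {𝔸 : Type*} [NormedRing 𝔸] [NormedAlgebra ℚ 𝔸] [CompleteSpace 𝔸]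

theorem exp_mul_exp_neg (x : 𝔸) : exp x * exp (-x) = 1 := by
  rw [← NormedSpace.exp_add_of_commute (Commute.refl x).neg_right, add_neg_cancel, exp_zero]

theorem exp_neg_mul_exp (x : 𝔸) : exp (-x) * exp x = 1 := by
  simpa using exp_mul_exp_neg (-x)

theorem exp_neg_mul_mul_exp_of_anticommute {x b : 𝔸} (h : x * b = -(b * x)) :
    exp (-b) * x * exp b = exp (-(b + b)) * x := by
  have hsc : SemiconjBy x b (-b) := by rw [SemiconjBy, h, neg_mul]
  rw [mul_assoc, hsc.exp_right.eq, ← mul_assoc, neg_add,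
    NormedSpace.exp_add_of_commute (Commute.refl _)]

end Rat

section Complex
variable {𝔸 : Type*} [NormedRing 𝔸] [NormedAlgebra ℂ 𝔸]

theorem star_exp_ofReal_smul_of_star_eq_neg [StarRing 𝔸] [StarModule ℂ 𝔸] [ContinuousStar 𝔸]
    {a : 𝔸} (ha : star a = -a) (t : ℝ) :
    star (exp ((t : ℂ) • a)) = exp (-((t : ℂ) • a)) := by
  rw [star_exp, star_smul, Complex.star_def, Complex.conj_ofReal, ha, smul_neg]

variable [CompleteSpace 𝔸]

theorem exp_smul_of_mul_self_eq_one {x : 𝔸} (hx : x * x = 1) (z : ℂ) :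
    exp (z • x) = Complex.cosh z • (1 : 𝔸) + Complex.sinh z • x := by
  have hpow : ∀ n, x ^ (2 * n) = 1 := fun n => by rw [pow_mul, sq, hx, one_pow]
  refine (exp_series_hasSum_exp' (𝕂 := ℂ) (z • x)).unique (HasSum.even_add_odd ?_ ?_)
  · convert (Complex.hasSum_cosh z).smul_const (1 : 𝔸) using 2 with n
    rw [smul_pow, hpow, smul_smul, div_eq_inv_mul]
  · convert (Complex.hasSum_sinh z).smul_const x using 2 with n
    rw [smul_pow, pow_succ x, hpow, one_mul, smul_smul, div_eq_inv_mul]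

theorem hasDerivAt_exp_ofReal_smul (a : 𝔸) (t : ℝ) :
    HasDerivAt (fun s : ℝ => exp ((s : ℂ) • a)) (exp ((t : ℂ) • a) * a) t :=
  ((hasDerivAt_exp_smul_const a (t : ℂ)).scomp t Complex.ofRealCLM.hasDerivAt).congr_deriv
    (by simp)

theorem hasDerivAt_exp_smul_mul_exp_smul (a b : 𝔸) (t : ℝ) :
    HasDerivAt (fun s : ℝ => exp ((s : ℂ) • a) * exp ((s : ℂ) • b))
      (exp ((t : ℂ) • a) * exp ((t : ℂ) • b) *
        (exp (-((t : ℂ) • b)) * a * exp ((t : ℂ) • b) + b)) t := by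
  let _ := NormedAlgebra.restrictScalars ℚ ℂ 𝔸
  refine ((hasDerivAt_exp_ofReal_smul a t).mul (hasDerivAt_exp_ofReal_smul b t)).congr_deriv ?_
  simp only [mul_add, ← mul_assoc, mul_assoc _ (exp ((t : ℂ) • b)) (exp (-((t : ℂ) • b))),
    exp_mul_exp_neg, mul_one]

theorem star_mul_deriv_eq_of_hasDerivAt_exp_smul_mul_exp_smul [StarRing 𝔸] [StarModule ℂ 𝔸]
    [ContinuousStar 𝔸] {a b V' : 𝔸}
    (ha : star a = -a) (hb : star b = -b) {t : ℝ}
    (hV' : HasDerivAt (fun s : ℝ => exp ((s : ℂ) • a) * exp ((s : ℂ) • b)) V' t) :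
    star (exp ((t : ℂ) • a) * exp ((t : ℂ) • b)) * V' =
      exp (-((t : ℂ) • b)) * a * exp ((t : ℂ) • b) + b := by
  let _ := NormedAlgebra.restrictScalars ℚ ℂ 𝔸
  rw [hV'.unique (hasDerivAt_exp_smul_mul_exp_smul a b t), star_mul,
    star_exp_ofReal_smul_of_star_eq_neg ha, star_exp_ofReal_smul_of_star_eq_neg hb]
  simp only [← mul_assoc, mul_assoc _ (exp (-((t : ℂ) • a))) (exp ((t : ℂ) • a)),
    exp_neg_mul_exp, mul_one, one_mul]

theorem exp_neg_mul_mul_exp_I_smul_of_anticommute {X H : 𝔸} (hX2 : X * X = 1)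
    (hXH : X * H = -(H * X)) (t : ℝ) :
    exp (-((t : ℂ) • Complex.I • X)) * H * exp ((t : ℂ) • Complex.I • X) =
      (Real.cos (2 * t) : ℂ) • H - (Real.sin (2 * t) * Complex.I) • (X * H) := by
  let _ := NormedAlgebra.restrictScalars ℚ ℂ 𝔸
  have hanti : H * ((t : ℂ) • Complex.I • X) = -(((t : ℂ) • Complex.I • X) * H) := by
    simp only [smul_mul_assoc, mul_smul_comm, hXH, smul_neg, neg_neg]
  have hdouble : -((t : ℂ) • Complex.I • X + (t : ℂ) • Complex.I • X) =
      (-(2 * (t : ℂ)) * Complex.I) • X := by module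
  rw [exp_neg_mul_mul_exp_of_anticommute hanti, hdouble, exp_smul_of_mul_self_eq_one hX2,
    Complex.cosh_mul_I, Complex.sinh_mul_I, Complex.cos_neg, Complex.sin_neg]
  push_cast
  simp only [add_mul, smul_mul_assoc, one_mul]
  module

theorem projection_mul_exp_conj_mul_projection {P X H : 𝔸} (hX2 : X * X = 1)
    (hXH : X * H = -(H * X)) (hP : P * P = P) (hHP : H * P = P * H)
    (hPHXP : P * (H * X) * P = 0) (t : ℝ) :
    P * (exp (-((t : ℂ) • Complex.I • X)) * H * exp ((t : ℂ) • Complex.I • X)) * P =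
      (Real.cos (2 * t) : ℂ) • (H * P) := by
  have hPXHP : P * (X * H) * P = 0 := by
    rw [hXH, mul_neg, neg_mul, hPHXP, neg_zero]
  have hPHP : P * H * P = H * P := by
    rw [← hHP, mul_assoc, hP]
  rw [exp_neg_mul_mul_exp_I_smul_of_anticommute hX2 hXH, mul_sub, sub_mul, mul_smul_comm,
    mul_smul_comm, smul_mul_assoc, smul_mul_assoc, hPHP, hPXHP, smul_zero, sub_zero]

end Complex

theorem projected_generator_general {N : ℕ} (θ : ℝ)
    (P X H : Matrix (Fin N) (Fin N) ℂ)
    (hP_idem : P * P = P)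
    (hX_herm : Xᴴ = X) (hH_herm : Hᴴ = H)
    (hX2 : X * X = 1)
    (hXH : X * H = -(H * X))
    (hHP : H * P = P * H)
    (hPXP : P * X * P = 0) (hPHXP : P * (H * X) * P = 0)
    (V V' : ℝ → Matrix (Fin N) (Fin N) ℂ)
    (hVdef : ∀ φ, V φ =
      NormedSpace.exp ((Complex.I * (θ * φ / (2 * Real.pi))) • H) *
        NormedSpace.exp ((Complex.I * φ) • X))
    (hV' : ∀ φ, HasDerivAt V (V' φ) φ) :
    ∀ φ : ℝ, P * (V φ)ᴴ * V' φ * P =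
      (Complex.I * (θ / (2 * Real.pi)) * Real.cos (2 * φ)) • (H * P) := by
  intro φ
  let _ : NormedRing (Matrix (Fin N) (Fin N) ℂ) := Matrix.frobeniusNormedRing
  let _ : NormedAlgebra ℂ (Matrix (Fin N) (Fin N) ℂ) := Matrix.frobeniusNormedAlgebra
  set c : ℂ := Complex.I * (θ / (2 * Real.pi))
  have hV : V = fun s : ℝ => exp ((s : ℂ) • c • H) * exp ((s : ℂ) • Complex.I • X) :=
    funext fun s => by
      rw [hVdef, smul_smul, smul_smul]
      congr 3 <;> ring
  have hskewH : star (c • H) = -(c • H) := by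
    rw [star_smul, star_eq_conjTranspose, hH_herm, ← neg_smul]
    simp [c]
  have hskewX : star (Complex.I • X) = -(Complex.I • X) := by
    rw [star_smul, star_eq_conjTranspose, hX_herm, ← neg_smul]
    simp
  have hgen : (V φ)ᴴ * V' φ =
      exp (-((φ : ℂ) • Complex.I • X)) * c • H * exp ((φ : ℂ) • Complex.I • X) + Complex.I • X := by
    rw [← star_eq_conjTranspose, hV]
    exact star_mul_deriv_eq_of_hasDerivAt_exp_smul_mul_exp_smul hskewH hskewX (hV ▸ hV' φ)
  have hproj : P * (exp (-((φ : ℂ) • Complex.I • X)) * H * exp ((φ : ℂ) • Complex.I • X)) * P =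
      (Real.cos (2 * φ) : ℂ) • (H * P) :=
    projection_mul_exp_conj_mul_projection hX2 hXH hP_idem hHP hPHXP φ
  calc P * (V φ)ᴴ * V' φ * P
      = c • (P * (exp (-((φ : ℂ) • Complex.I • X)) * H * exp ((φ : ℂ) • Complex.I • X)) * P)
          + Complex.I • (P * X * P) := by
        rw [mul_assoc P, hgen]
        simp only [mul_add, add_mul, smul_mul_assoc, mul_smul_comm, mul_assoc]
    _ = (c * Real.cos (2 * φ)) • (H * P) := by
        rw [hproj, hPXP, smul_zero, add_zero, smul_smul]

/-- For `V(φ) = e^{i(θφ/2π)H} e^{iφX}` with Hermitian involutions `X, H`,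
`{X,H} = 0`, and an orthogonal projector `P` with `[H,P] = 0`, `PXP = 0`,
`P(HX)P = 0`, the projected generator is
`P V(φ)ᴴ V'(φ) P = i(θ/2π)cos(2φ) H P`. -/
theorem projected_generator {N : ℕ} (θ : ℝ)
    (P X H : Matrix (Fin N) (Fin N) ℂ)
    (hP_herm : Pᴴ = P) (hP_idem : P * P = P)
    (hX_herm : Xᴴ = X) (hH_herm : Hᴴ = H)
    (hX2 : X * X = 1) (hH2 : H * H = 1)
    (hXH : X * H = -(H * X))
    (hHP : H * P = P * H)
    (hPXP : P * X * P = 0) (hPHXP : P * (H * X) * P = 0)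
    (V V' : ℝ → Matrix (Fin N) (Fin N) ℂ)
    (hVdef : ∀ φ, V φ =
      NormedSpace.exp ((Complex.I * (θ * φ / (2 * Real.pi))) • H) *
        NormedSpace.exp ((Complex.I * φ) • X))
    (hV' : ∀ φ, HasDerivAt V (V' φ) φ) :
    ∀ φ : ℝ, P * (V φ)ᴴ * V' φ * P =
      (Complex.I * (θ / (2 * Real.pi)) * Real.cos (2 * φ)) • (H * P) :=
  projected_generator_general θ P X H hP_idem hX_herm hH_herm hX2 hXH hHP hPXP hPHXP V V' hVdef hV'
end

section
/- Under the same hypotheses, the complementary projection satisfies (I − P₀) V(φ)† V(φ−δ) P₀ = [sin((θ/2π)δ)sin(2φ−δ) HX − i cos((θ/2π)δ)sin(δ) X] P₀. -/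
/-!
Because `X² = H² = 1`, every exponential is an Euler formula `exp (i t A) = cos t + i sin t A`.
Hence `V(φ)† V(φ - δ) = e^{-iφX} e^{-iεH} e^{i(φ-δ)X}` with `ε = θδ/2π`, and since `X`
anticommutes with `H`, moving `e^{-iφX}` past `H` turns it into `e^{iφX}`:
`V(φ)† V(φ - δ) = cos ε e^{-iδX} - i sin ε H e^{i(2φ-δ)X}`.
Finally `(1 - P₀) e^{iτX} P₀ = i sin τ X P₀` because `P₀ X P₀ = 0`, and `H` commutes with `P₀`.
-/

open Matrix NormedSpace Complex

variable {𝔸 : Type*} [Ring 𝔸] [Algebra ℂ 𝔸] [TopologicalSpace 𝔸] [IsTopologicalRing 𝔸]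
  [T2Space 𝔸]

theorem star_exp_I_mul_smul [StarRing 𝔸] [ContinuousStar 𝔸] [StarModule ℂ 𝔸] {A : 𝔸}
    (hA : star A = A) (t : ℝ) : star (exp ((I * t) • A)) = exp ((I * (-t : ℝ)) • A) := by
  rw [star_exp, star_smul, hA, star_mul', star_def, conj_I, conj_ofReal, ofReal_neg, mul_neg,
    neg_mul]

variable [ContinuousSMul ℂ 𝔸]

theorem exp_I_mul_smul_of_mul_self_eq_one {A : 𝔸} (hA : A * A = 1) (t : ℂ) :
    exp ((I * t) • A) = cos t • (1 : 𝔸) + (I * sin t) • A := by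
  have heven (k : ℕ) : A ^ (2 * k) = 1 := by rw [pow_mul, sq, hA, one_pow]
  have hodd (k : ℕ) : A ^ (2 * k + 1) = A := by rw [pow_succ, heven, one_mul]
  rw [exp_eq_tsum ℂ]
  refine HasSum.tsum_eq <| HasSum.even_add_odd ?_ ?_
  · convert (hasSum_cos' t).smul_const (1 : 𝔸) using 2 with k
    rw [smul_pow, heven, smul_smul, mul_comm I]
    field_simp
  · convert ((hasSum_sin' t).mul_left I).smul_const A using 2 with k
    rw [smul_pow, hodd, smul_smul, mul_comm I]
    field_simp

theorem exp_I_mul_smul_mul_exp_I_mul_smul {A : 𝔸} (hA : A * A = 1) (s t : ℂ) :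
    exp ((I * s) • A) * exp ((I * t) • A) = exp ((I * (s + t)) • A) := by
  rw [exp_I_mul_smul_of_mul_self_eq_one hA, exp_I_mul_smul_of_mul_self_eq_one hA,
    exp_I_mul_smul_of_mul_self_eq_one hA, cos_add, sin_add]
  simp only [add_mul, mul_add, smul_mul_assoc, mul_smul_comm, one_mul, mul_one, hA]
  match_scalars
  · linear_combination (sin s * sin t) * I_mul_I
  · ring

theorem exp_I_mul_smul_mul_of_anticommute {A B : 𝔸} (hA : A * A = 1) (hAB : A * B = -(B * A))
    (t : ℂ) : exp ((I * t) • A) * B = B * exp ((I * -t) • A) := by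
  rw [exp_I_mul_smul_of_mul_self_eq_one hA, exp_I_mul_smul_of_mul_self_eq_one hA, cos_neg,
    sin_neg]
  simp only [add_mul, mul_add, smul_mul_assoc, mul_smul_comm, one_mul, mul_one, hAB, mul_neg,
    smul_neg, neg_smul]

theorem one_sub_mul_exp_I_mul_smul_mul {A P : 𝔸} (hA : A * A = 1) (hP : P * P = P)
    (hPAP : P * A * P = 0) (t : ℂ) :
    (1 - P) * exp ((I * t) • A) * P = (I * sin t) • (A * P) := by
  have hP_compl : (1 - P) * P = 0 := by rw [sub_mul, one_mul, hP, sub_self]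
  have hAP : (1 - P) * A * P = A * P := by rw [sub_mul, sub_mul, one_mul, hPAP, sub_zero]
  rw [exp_I_mul_smul_of_mul_self_eq_one hA, mul_add, add_mul, mul_smul_comm, mul_smul_comm,
    mul_one, smul_mul_assoc, smul_mul_assoc, hP_compl, hAP, smul_zero, zero_add]

theorem one_sub_mul_exp_mul_exp_mul_exp_mul {X H P : 𝔸} (hX : X * X = 1) (hH : H * H = 1)
    (hXH : X * H = -(H * X)) (hHP : H * P = P * H) (hP : P * P = P) (hPXP : P * X * P = 0)
    (φ ε ψ : ℂ) :
    (1 - P) * (exp ((I * -φ) • X) * exp ((I * -ε) • H) * exp ((I * ψ) • X)) * P =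
      (sin ε * sin (φ + ψ)) • (H * X * P) + (I * (cos ε * sin (ψ - φ))) • (X * P) := by
  have hmiddle : exp ((I * -φ) • X) * exp ((I * -ε) • H) * exp ((I * ψ) • X) =
      cos ε • exp ((I * (ψ - φ)) • X) - (I * sin ε) • (H * exp ((I * (φ + ψ)) • X)) := by
    rw [exp_I_mul_smul_of_mul_self_eq_one hH, cos_neg, sin_neg]
    simp only [mul_add, add_mul, mul_one, mul_smul_comm, smul_mul_assoc,
      exp_I_mul_smul_mul_of_anticommute hX hXH, neg_neg, mul_assoc,
      exp_I_mul_smul_mul_exp_I_mul_smul hX]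
    rw [← mul_add, ← mul_add, neg_add_eq_sub]
    module
  have hHPc : (1 - P) * H = H * (1 - P) := by rw [sub_mul, mul_sub, one_mul, mul_one, hHP]
  have hH_compl (t : ℂ) :
      (1 - P) * (H * exp ((I * t) • X)) * P = (I * sin t) • (H * X * P) := by
    rw [← mul_assoc, hHPc, mul_assoc H, mul_assoc H, one_sub_mul_exp_I_mul_smul_mul hX hP hPXP,
      mul_smul_comm, mul_assoc]
  rw [hmiddle, mul_sub, sub_mul, mul_smul_comm, mul_smul_comm, smul_mul_assoc, smul_mul_assoc,
    one_sub_mul_exp_I_mul_smul_mul hX hP hPXP, hH_compl]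
  match_scalars
  · ring
  · linear_combination -(sin ε * sin (φ + ψ)) * I_mul_I

theorem one_sub_mul_star_mul_mul [StarRing 𝔸] [ContinuousStar 𝔸] [StarModule ℂ 𝔸] {X H P : 𝔸}
    (hX : X * X = 1) (hH : H * H = 1) (hXH : X * H = -(H * X)) (hHP : H * P = P * H)
    (hP : P * P = P) (hPXP : P * X * P = 0) (hXs : star X = X) (hHs : star H = H)
    (a φ b ψ : ℝ) :
    (1 - P) * star (exp ((I * a) • H) * exp ((I * φ) • X)) *
        (exp ((I * b) • H) * exp ((I * ψ) • X)) * P =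
      ((Real.sin (a - b) * Real.sin (φ + ψ) : ℝ) : ℂ) • (H * X * P) -
        (I * ((Real.cos (a - b) * Real.sin (φ - ψ) : ℝ) : ℂ)) • (X * P) := by
  have hV : star (exp ((I * a) • H) * exp ((I * φ) • X)) *
        (exp ((I * b) • H) * exp ((I * ψ) • X)) =
      exp ((I * -(φ : ℂ)) • X) * exp ((I * -((a - b : ℝ) : ℂ)) • H) * exp ((I * ψ) • X) := by
    rw [star_mul, star_exp_I_mul_smul hXs, star_exp_I_mul_smul hHs, mul_assoc,
      ← mul_assoc _ _ (exp ((I * ψ) • X)), exp_I_mul_smul_mul_exp_I_mul_smul hH, ← mul_assoc]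
    congr 4 <;> push_cast <;> ring
  rw [mul_assoc (1 - P), hV, one_sub_mul_exp_mul_exp_mul_exp_mul hX hH hXH hHP hP hPXP]
  push_cast
  rw [← neg_sub (φ : ℂ), sin_neg]
  match_scalars <;> ring

theorem sandwiched_rotation_error_block_general {N : ℕ} (θ : ℝ)
    (P₀ X H : Matrix (Fin N) (Fin N) ℂ)
    (hP_idem : P₀ * P₀ = P₀)
    (hX_herm : Xᴴ = X) (hH_herm : Hᴴ = H)
    (hX2 : X * X = 1) (hH2 : H * H = 1)
    (hXH : X * H = -(H * X))
    (hHP : H * P₀ = P₀ * H)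
    (hPXP : P₀ * X * P₀ = 0)
    (V : ℝ → Matrix (Fin N) (Fin N) ℂ)
    (hVdef : ∀ φ, V φ =
      NormedSpace.exp ((Complex.I * (θ * φ / (2 * Real.pi))) • H) *
        NormedSpace.exp ((Complex.I * φ) • X)) :
    ∀ φ δ : ℝ, (1 - P₀) * (V φ)ᴴ * V (φ - δ) * P₀ =
      ((Real.sin (θ / (2 * Real.pi) * δ) * Real.sin (2 * φ - δ) : ℝ) : ℂ) •
          (H * X * P₀) -
        (Complex.I * ((Real.cos (θ / (2 * Real.pi) * δ) * Real.sin δ : ℝ) : ℂ)) •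
          (X * P₀) := by
  intro φ δ
  have h := one_sub_mul_star_mul_mul hX2 hH2 hXH hHP hP_idem hPXP hX_herm hH_herm
      (θ * φ / (2 * Real.pi)) φ (θ * (φ - δ) / (2 * Real.pi)) (φ - δ)
  rw [show θ * φ / (2 * Real.pi) - θ * (φ - δ) / (2 * Real.pi) = θ / (2 * Real.pi) * δ by ring,
    show φ + (φ - δ) = 2 * φ - δ by ring, sub_sub_cancel, star_eq_conjTranspose] at h
  rw [hVdef, hVdef]
  exact_mod_cast h

/-- Complementary block of the sandwiched small-rotation operator:
`(I − P₀) V(φ)ᴴ V(φ−δ) P₀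
  = [sin((θ/2π)δ)sin(2φ−δ) HX − i cos((θ/2π)δ)sin δ · X] P₀`. -/
theorem sandwiched_rotation_error_block {N : ℕ} (θ : ℝ)
    (P₀ X H : Matrix (Fin N) (Fin N) ℂ)
    (hP_herm : P₀ᴴ = P₀) (hP_idem : P₀ * P₀ = P₀)
    (hX_herm : Xᴴ = X) (hH_herm : Hᴴ = H)
    (hX2 : X * X = 1) (hH2 : H * H = 1)
    (hXH : X * H = -(H * X))
    (hHP : H * P₀ = P₀ * H)
    (hPXP : P₀ * X * P₀ = 0) (hPXHP : P₀ * (X * H) * P₀ = 0)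
    (hXorth : (1 - P₀) * X * P₀ = X * P₀)
    (V : ℝ → Matrix (Fin N) (Fin N) ℂ)
    (hVdef : ∀ φ, V φ =
      NormedSpace.exp ((Complex.I * (θ * φ / (2 * Real.pi))) • H) *
        NormedSpace.exp ((Complex.I * φ) • X)) :
    ∀ φ δ : ℝ, (1 - P₀) * (V φ)ᴴ * V (φ - δ) * P₀ =
      ((Real.sin (θ / (2 * Real.pi) * δ) * Real.sin (2 * φ - δ) : ℝ) : ℂ) •
          (H * X * P₀) -
        (Complex.I * ((Real.cos (θ / (2 * Real.pi) * δ) * Real.sin δ : ℝ) : ℂ)) •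
          (X * P₀) :=
  sandwiched_rotation_error_block_general θ P₀ X H hP_idem hX_herm hH_herm hX2 hH2 hXH hHP hPXP V
    hVdef
end
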